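/- arXiv:1705.01838 — 8 statements merged into one kernel-verified Lean document; each statement's English description precedes it below -/
import Mathlib

section
/- Let q be a prime power with q odd or q = 2^m for m ≥ 2, let n ≥ 1, and let a ∈ F_q[X_1,...,X_{i-1},X_{i+1},...,X_n]. Then the elementary automorphism E_a : F_q^n → F_q^n sending (x_1,...,x_n) to (x_1,...,x_{i-1}, x_i + a(x_1,...,x_{i-1},x_{i+1},...,x_n), x_{i+1},...,x_n) is an even permutation of F_q^n. -/
/-!
Splitting off the `i`-th coordinate identifies `F^n` with `F × F^{n-1}`, and under this
identification the elementary automorphism becomes the product over `z ∈ F^{n-1}` of the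
translations `y ↦ y + a(z)` of `F`. It therefore suffices that every translation of `F` is even.
If `q` is odd, a translation has odd order. If `q = 2^m`, a nonzero translation is a
fixed-point-free involution, i.e. a product of `q / 2` disjoint transpositions, and `q / 2` is
even as soon as `m ≥ 2`.
-/

open Equiv Equiv.Perm

theorem Equiv.addRight_pow {G : Type*} [AddGroup G] (c : G) (k : ℕ) :
    Equiv.addRight c ^ k = Equiv.addRight (k • c) := by
  induction k with
  | zero => ext; simp
  | succ k ih => ext x; simp [pow_succ', ih, succ_nsmul, add_assoc]

section Translation

variable {G : Type*} [AddGroup G] [Fintype G] [DecidableEq G]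

theorem Equiv.Perm.sign_addRight_of_odd_card (hG : Odd (Fintype.card G)) (c : G) :
    sign (Equiv.addRight c) = 1 := by
  have hpow : sign (Equiv.addRight c) ^ Fintype.card G = 1 := by
    rw [← map_pow, Equiv.addRight_pow, card_nsmul_eq_zero, Equiv.addRight_zero, map_one]
  rwa [Int.units_pow_eq_pow_mod_two, Nat.odd_iff.mp hG, pow_one] at hpow

theorem Equiv.Perm.sign_addRight_of_add_self_eq_zero (hG : 4 ∣ Fintype.card G) {c : G}
    (hc : c + c = 0) : sign (Equiv.addRight c) = 1 := by
  rcases eq_or_ne c 0 with rfl | hc0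
  · rw [Equiv.addRight_zero, map_one]
  have hsq : Equiv.addRight c ^ 2 = 1 := by
    ext x; simp [sq, add_assoc, hc]
  have hfix : Fintype.card (Function.fixedPoints (Equiv.addRight c)) = 0 :=
    Fintype.card_eq_zero_iff.mpr ⟨fun ⟨x, hx⟩ => hc0 (by simpa [Function.IsFixedPt] using hx)⟩
  obtain ⟨k, hk⟩ := hG
  rw [sign_of_pow_two_eq_one hsq, hfix, hk, Nat.sub_zero,
    show 4 * k / 2 = 2 * k by omega, pow_mul, Int.units_sq, one_pow]

end Translation

theorem Equiv.Perm.sign_of_update_add {ι G : Type*} [Fintype ι] [DecidableEq ι] [AddGroup G]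
    [Fintype G] [DecidableEq G] (i : ι) (f : ({j // j ≠ i} → G) → G) (σ : Perm (ι → G))
    (hσ : ∀ x, σ x = Function.update x i (x i + f (fun j => x j))) :
    sign σ = ∏ z, sign (Equiv.addRight (f z)) := by
  rw [← sign_prodCongrLeft]
  refine sign_eq_sign_of_equiv _ _ (Equiv.funSplitAt i G) fun x => ?_
  ext : 1
  · simp [hσ]
  · funext j
    simp [hσ, Function.update_of_ne j.2]

theorem FiniteField.sign_addRight {F : Type*} [Field F] [Fintype F] [DecidableEq F]
    (hF : Odd (Fintype.card F) ∨ 4 ∣ Fintype.card F) (c : F) :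
    sign (Equiv.addRight c) = 1 := by
  rcases hF with hodd | h4
  · exact sign_addRight_of_odd_card hodd c
  · have : ringChar F = 2 :=
      even_card_iff_char_two.mpr (Nat.mod_eq_zero_of_dvd (dvd_trans ⟨2, rfl⟩ h4))
    have : CharP F 2 := ringChar.eq_iff.mp this
    exact sign_addRight_of_add_self_eq_zero h4 (CharTwo.add_self_eq_zero c)

theorem stmt0_general (q n : ℕ)
    (hq : Odd q ∨ ∃ m : ℕ, 2 ≤ m ∧ q = 2 ^ m)
    (F : Type) [Field F] [Fintype F] [DecidableEq F] (hcard : Fintype.card F = q)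
    (i : Fin n) (a : MvPolynomial {j : Fin n // j ≠ i} F)
    (σ : Equiv.Perm (Fin n → F))
    (hσ : ∀ x, σ x = Function.update x i
      (x i + MvPolynomial.eval (fun j => x j.1) a)) :
    Equiv.Perm.sign σ = 1 := by
  have hF : Odd (Fintype.card F) ∨ 4 ∣ Fintype.card F := by
    rcases hq with hodd | ⟨m, hm, rfl⟩
    · exact Or.inl (hcard ▸ hodd)
    · exact Or.inr (hcard ▸ (Nat.pow_dvd_pow 2 hm : 2 ^ 2 ∣ 2 ^ m))
  rw [sign_of_update_add i (fun z => MvPolynomial.eval z a) σ hσ]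
  exact Finset.prod_eq_one fun z _ => FiniteField.sign_addRight hF _

/-- For `q` odd or `q = 2^m` with `m ≥ 2`, every elementary
automorphism of `F_q^n` (adding to the `i`-th coordinate a polynomial in the
other variables) is an even permutation. -/
theorem stmt0 (q n : ℕ) (hn : 1 ≤ n)
    (hq : Odd q ∨ ∃ m : ℕ, 2 ≤ m ∧ q = 2 ^ m)
    (F : Type) [Field F] [Fintype F] [DecidableEq F] (hcard : Fintype.card F = q)
    (i : Fin n) (a : MvPolynomial {j : Fin n // j ≠ i} F)
    (σ : Equiv.Perm (Fin n → F))
    (hσ : ∀ x, σ x = Function.update x i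
      (x i + MvPolynomial.eval (fun j => x j.1) a)) :
    Equiv.Perm.sign σ = 1 :=
  stmt0_general q n hq F hcard i a σ hσ
end

section
/- Let q = 2, let n ≥ 1, and let a ∈ F_2[X_1,...,X_{i-1},X_{i+1},...,X_n]. The elementary automorphism E_a of F_2^n (adding a to the i-th coordinate) is an odd permutation if and only if the number of monomials of a that involve all of the variables X_1,...,X_{i-1},X_{i+1},...,X_n (i.e. every variable except X_i appears with exponent ≥ 1) is odd. Equivalently, sgn(E_a) = (-1)^{M_a}, where M_a is the number of such monomials appearing in a with nonzero coefficient. -/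
/-!
Write `F_2^n = F_2 × F_2^{n-1}`, splitting off the `i`-th coordinate. Then `E_a` translates each
fibre `F_2 × {y}` by `a(y)`, which is a transposition exactly when `a(y) = 1`, so
`sgn E_a = (-1)^{#{y | a(y) = 1}}` and the exponent is `∑_y a(y)` modulo 2. Summing a monomial
`∏ X_j^{e_j}` over `F_2^{n-1}` factors as `∏_j ∑_{t ∈ F_2} t^{e_j}`, and `∑_t t^e` is `1` for
`e ≥ 1` but `0` for `e = 0`; hence `∑_y a(y) ≡ M_a`.
-/

open Finset MvPolynomial Equiv

lemma ZMod.eq_zero_or_eq_one_two (c : ZMod 2) : c = 0 ∨ c = 1 := by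
  revert c
  decide

lemma ZMod.sum_pow_two (e : ℕ) : ∑ t : ZMod 2, t ^ e = if e = 0 then 0 else 1 := by
  rw [show (univ : Finset (ZMod 2)) = {0, 1} from rfl, sum_pair zero_ne_one]
  rcases e with _ | k
  · decide
  · simp

lemma sum_prod_pow_zmod_two {σ : Type*} [Fintype σ] [DecidableEq σ] (s : σ →₀ ℕ) :
    ∑ y : σ → ZMod 2, ∏ j, y j ^ s j = if ∀ j, 1 ≤ s j then 1 else 0 := by
  rw [← Fintype.prod_sum (fun j (t : ZMod 2) => t ^ s j)]
  split_ifs with hpos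
  · exact prod_eq_one fun j _ => by rw [ZMod.sum_pow_two, if_neg (by have := hpos j; omega)]
  · simp only [not_forall, not_le] at hpos
    obtain ⟨j, hj⟩ := hpos
    exact prod_eq_zero (mem_univ j) (by rw [ZMod.sum_pow_two, if_pos (by omega)])

lemma MvPolynomial.sum_eval_zmod_two {σ : Type*} [Fintype σ] [DecidableEq σ]
    (a : MvPolynomial σ (ZMod 2)) :
    ∑ y, eval y a = #{s ∈ a.support | ∀ j, 1 ≤ s j} := by
  simp_rw [eval_eq']
  rw [sum_comm]
  have hmonomial : ∀ s ∈ a.support,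
      ∑ y : σ → ZMod 2, coeff s a * ∏ j, y j ^ s j = if ∀ j, 1 ≤ s j then 1 else 0 := by
    intro s hs
    rw [← mul_sum, (ZMod.eq_zero_or_eq_one_two _).resolve_left (mem_support_iff.mp hs),
      one_mul, sum_prod_pow_zmod_two]
  rw [sum_congr rfl hmonomial, sum_boole]

lemma sign_addLeft_zmod_two (c : ZMod 2) : Perm.sign (Equiv.addLeft c) = (-1) ^ c.val := by
  obtain rfl | rfl := ZMod.eq_zero_or_eq_one_two c
  · simp
  · have hswap : Equiv.addLeft (1 : ZMod 2) = Equiv.swap 0 1 := by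
      ext t
      fin_cases t <;> rfl
    rw [hswap, Perm.sign_swap zero_ne_one]
    rfl

lemma Int.units_neg_one_pow_eq_of_natCast_zmod_two {m n : ℕ} (h : (m : ZMod 2) = n) :
    (-1 : ℤˣ) ^ m = (-1) ^ n := by
  rw [Int.units_pow_eq_pow_mod_two, Int.units_pow_eq_pow_mod_two _ n,
    (ZMod.natCast_eq_natCast_iff' m n 2).mp h]

lemma sign_eq_of_apply_eq_update_add {ι : Type*} [Fintype ι] [DecidableEq ι] (i : ι)
    (g : ({j // j ≠ i} → ZMod 2) → ZMod 2) (σ : Perm (ι → ZMod 2))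
    (hσ : ∀ x, σ x = Function.update x i (x i + g fun j => x j)) :
    Perm.sign σ = (-1) ^ ∑ y, (g y).val := by
  have hconj : σ = (funSplitAt i (ZMod 2)).symm.permCongr
      (prodCongrLeft fun y => Equiv.addLeft (g y)) := by
    ext x j
    rw [hσ]
    by_cases hj : j = i
    · subst hj
      simp [add_comm]
    · simp [hj]
  rw [hconj, Perm.sign_permCongr, Perm.sign_prodCongrLeft]
  simp only [sign_addLeft_zmod_two, prod_pow_eq_pow_sum]

theorem stmt1_general (n : ℕ) (i : Fin n)
    (a : MvPolynomial {j : Fin n // j ≠ i} (ZMod 2))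
    (σ : Equiv.Perm (Fin n → ZMod 2))
    (hσ : ∀ x, σ x = Function.update x i
      (x i + MvPolynomial.eval (fun j => x j.1) a))
    (M : ℕ)
    (hM : M = (a.support.filter (fun s => ∀ j : {j : Fin n // j ≠ i}, 1 ≤ s j)).card) :
    Equiv.Perm.sign σ = (-1) ^ M := by
  rw [sign_eq_of_apply_eq_update_add i (fun y => eval y a) σ hσ]
  apply Int.units_neg_one_pow_eq_of_natCast_zmod_two
  push_cast [ZMod.natCast_zmod_val]
  rw [hM, MvPolynomial.sum_eval_zmod_two]

/-- Over `F_2`, the sign of the elementary automorphism `E_a`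
equals `(-1)^{M_a}`, where `M_a` is the number of monomials of `a` in which
every variable other than `X_i` appears with positive exponent. -/
theorem stmt1 (n : ℕ) (hn : 1 ≤ n) (i : Fin n)
    (a : MvPolynomial {j : Fin n // j ≠ i} (ZMod 2))
    (σ : Equiv.Perm (Fin n → ZMod 2))
    (hσ : ∀ x, σ x = Function.update x i
      (x i + MvPolynomial.eval (fun j => x j.1) a))
    (M : ℕ)
    (hM : M = (a.support.filter (fun s => ∀ j : {j : Fin n // j ≠ i}, 1 ≤ s j)).card) :
    Equiv.Perm.sign σ = (-1) ^ M :=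
  stmt1_general n i a σ hσ M hM
end

section
/- Let q be a prime power, n ≥ 2, and let c be a nonzero element of F_q. Fix an index i and a monomial m = ∏_{j ≠ i} X_j^{e_j} in the variables other than X_i in which every variable X_j (j ≠ i) appears with exponent e_j ≥ 1. Then the permutation of F_q^n sending (x_1,...,x_n) to (x_1,...,x_{i-1}, x_i + c·∏_{j≠i} x_j^{e_j}, x_{i+1},...,x_n) decomposes as a product of (q-1)^{n-1} · q/p disjoint cycles of length p, where p is the characteristic of F_q. -/
/-!
Write `M x = c * ∏_{j ≠ i} x_j ^ e_j`. Since `M` does not involve `x_i`, `σ^k` adds `k * M x`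
to the `i`-th coordinate, so `σ^p = 1` in characteristic `p` and every nontrivial cycle has
length `p`. A point moves iff `M x ≠ 0`, i.e. iff all coordinates other than the `i`-th are
nonzero; there are `q (q - 1)^(n-1)` such points, hence `(q - 1)^(n-1) q / p` cycles.
-/

open Equiv Finset Function

theorem Equiv.Perm.cycleType_eq_replicate_card_support_div {α : Type*} [Fintype α]
    [DecidableEq α] {σ : Perm α} {p : ℕ} [hp : Fact p.Prime] (hσ : σ ^ p = 1) :
    σ.cycleType = Multiset.replicate (#σ.support / p) p := by
  have hσp := Perm.cycleType_of_pow_prime_eq_one hσ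
  have hcard : #σ.support = σ.cycleType.card * p := by
    rw [← σ.sum_cycleType, hσp, Multiset.sum_replicate, smul_eq_mul, Multiset.card_replicate]
  rwa [hcard, Nat.mul_div_cancel _ hp.out.pos]

section Shear

variable {ι R : Type*} [DecidableEq ι] {i : ι} {M : (ι → R) → R} {σ : Perm (ι → R)}

theorem pow_apply_eq_update_add_nsmul [AddMonoid R]
    (hM : ∀ x a, M (update x i a) = M x) (hσ : ∀ x, σ x = update x i (x i + M x))
    (k : ℕ) (x : ι → R) : (σ ^ k) x = update x i (x i + k • M x) := by
  induction k generalizing x with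
  | zero => simp
  | succ k ih =>
    rw [pow_succ', Perm.mul_apply, ih, hσ, hM, update_self, update_idem, succ_nsmul,
      add_assoc]

theorem pow_char_eq_one [Ring R] (p : ℕ) [CharP R p]
    (hM : ∀ x a, M (update x i a) = M x) (hσ : ∀ x, σ x = update x i (x i + M x)) :
    σ ^ p = 1 := by
  ext x : 1
  rw [pow_apply_eq_update_add_nsmul hM hσ, nsmul_eq_mul, CharP.cast_eq_zero, zero_mul,
    add_zero, update_eq_self, Perm.one_apply]

theorem mem_support_iff_ne_zero [AddLeftCancelMonoid R] [Fintype ι] [DecidableEq R]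
    [Fintype R] (hσ : ∀ x, σ x = update x i (x i + M x)) (x : ι → R) :
    x ∈ σ.support ↔ M x ≠ 0 := by
  rw [Perm.mem_support, hσ, Ne, Ne, not_iff_not, update_eq_iff]
  simp

end Shear

theorem card_filter_forall_ne_ne_zero {ι R : Type*} [Fintype ι] [DecidableEq ι] [Fintype R]
    [DecidableEq R] [Zero R] (i : ι)
    [DecidablePred fun x : ι → R => ∀ j, j ≠ i → x j ≠ 0] :
    #{x : ι → R | ∀ j, j ≠ i → x j ≠ 0} =
      Fintype.card R * (Fintype.card R - 1) ^ (Fintype.card ι - 1) := by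
  have hpi : ({x : ι → R | ∀ j, j ≠ i → x j ≠ 0} : Finset _) =
      Fintype.piFinset fun j => if j = i then univ else {0}ᶜ := by
    ext x
    simp only [mem_filter, mem_univ, true_and, Fintype.mem_piFinset]
    refine forall_congr' fun j => ?_
    split_ifs with h <;> simp [h]
  rw [hpi, Fintype.card_piFinset, Fintype.prod_eq_mul_prod_compl i, if_pos rfl, card_univ,
    prod_congr rfl fun j hj => by
      rw [if_neg (mem_compl.mp hj ∘ mem_singleton.mpr)]]
  simp [card_compl]

section Monomial

variable {ι R : Type*} [Fintype ι] [DecidableEq ι] {i : ι}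

theorem mul_prod_pow_update_self [CommMonoid R] (c : R) (e : {j : ι // j ≠ i} → ℕ)
    (x : ι → R) (a : R) :
    c * ∏ j : {j : ι // j ≠ i}, update x i a j ^ e j =
      c * ∏ j : {j : ι // j ≠ i}, x j ^ e j := by
  simp_rw [fun j : {j : ι // j ≠ i} => update_of_ne j.2 a x]

theorem mul_prod_pow_ne_zero_iff [CommMonoidWithZero R] [NoZeroDivisors R] [Nontrivial R]
    {c : R} (hc : c ≠ 0) {e : {j : ι // j ≠ i} → ℕ} (he : ∀ j, e j ≠ 0)
    (x : ι → R) :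
    c * ∏ j : {j : ι // j ≠ i}, x j ^ e j ≠ 0 ↔ ∀ j, j ≠ i → x j ≠ 0 := by
  simp [hc, prod_ne_zero_iff, he]

end Monomial

theorem stmt2_general (p m q n : ℕ) (hp : p.Prime) (hm : 1 ≤ m) (hq : q = p ^ m)
    (F : Type) [Field F] [Fintype F] [DecidableEq F]
    (hcard : Fintype.card F = q) [CharP F p]
    (i : Fin n) (c : F) (hc : c ≠ 0)
    (e : {j : Fin n // j ≠ i} → ℕ) (he : ∀ j, 1 ≤ e j)
    (σ : Equiv.Perm (Fin n → F))
    (hσ : ∀ x, σ x = Function.update x i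
      (x i + c * ∏ j : {j : Fin n // j ≠ i}, x j.1 ^ e j)) :
    σ.cycleType = Multiset.replicate ((q - 1) ^ (n - 1) * p ^ (m - 1)) p := by
  have := Fact.mk hp
  have hsupport : σ.support = ({x | ∀ j, j ≠ i → x j ≠ 0} : Finset (Fin n → F)) := by
    ext x
    rw [mem_support_iff_ne_zero hσ,
      mul_prod_pow_ne_zero_iff hc fun j => Nat.one_le_iff_ne_zero.mp (he j), mem_filter,
      and_iff_right (mem_univ x)]
  have hσp : σ ^ p = 1 := pow_char_eq_one p (mul_prod_pow_update_self c e) hσ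
  rw [Perm.cycleType_eq_replicate_card_support_div hσp, hsupport, card_filter_forall_ne_ne_zero,
    hcard, Fintype.card_fin, hq, ← mul_pow_sub_one (Nat.one_le_iff_ne_zero.mp hm), mul_assoc,
    Nat.mul_div_cancel_left _ hp.pos, mul_comm]

/-- For a monomial `c·∏_{j≠i} X_j^{e_j}` with `c ≠ 0` and all
`e_j ≥ 1`, the elementary automorphism adding it to the `i`-th coordinate
decomposes as a product of `(q-1)^{n-1} · p^{m-1}` disjoint cycles of length
`p` (all other points fixed), where `q = p^m`. -/
theorem stmt2 (p m q n : ℕ) (hp : p.Prime) (hm : 1 ≤ m) (hq : q = p ^ m)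
    (hn : 2 ≤ n)
    (F : Type) [Field F] [Fintype F] [DecidableEq F]
    (hcard : Fintype.card F = q) [CharP F p]
    (i : Fin n) (c : F) (hc : c ≠ 0)
    (e : {j : Fin n // j ≠ i} → ℕ) (he : ∀ j, 1 ≤ e j)
    (σ : Equiv.Perm (Fin n → F))
    (hσ : ∀ x, σ x = Function.update x i
      (x i + c * ∏ j : {j : Fin n // j ≠ i}, x j.1 ^ e j)) :
    σ.cycleType = Multiset.replicate ((q - 1) ^ (n - 1) * p ^ (m - 1)) p :=
  stmt2_general p m q n hp hm hq F hcard i c hc e he σ hσ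
end

section
/- Let q be an odd prime power, n ≥ 1, c ∈ F_q^*, and i ∈ {1,...,n}. Then the sign of the permutation D_i(c) of F_q^n (multiplying the i-th coordinate by c) equals (-1)^h, where h is the discrete logarithm of c with respect to a fixed generator g of the cyclic group F_q^* (i.e., c = g^h with 0 ≤ h ≤ q-2). Equivalently, D_i(c) is odd if and only if c is a non-square in F_q^*. -/
/-!
Splitting off the `i`-th coordinate, `F^n ≃ F × F^(n-1)`, conjugates `D_i(c)` to `q^(n-1)` disjoint
copies of `x ↦ c x` on `F`, so its sign is that of `x ↦ c x` raised to an odd power, i.e. that sign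
itself. Now `c ↦ sign (x ↦ c x)` is a homomorphism `Fˣ →* ℤˣ`. On a generator `g` it is `-1`, since
`x ↦ g x` is a single cycle through the `q - 1` nonzero elements and `q - 1` is even; hence it sends
`g ^ h` to `(-1) ^ h`. It kills squares because every unit of `ℤ` squares to `1`, while `g ^ h` with
`h` even is a square.
-/

open Equiv Equiv.Perm

namespace Equiv.Perm

variable {ι α : Type*} [DecidableEq ι] [Fintype ι] [DecidableEq α] [Fintype α]

theorem sign_of_forall_apply_eq_update (i : ι) (τ : Perm α) (σ : Perm (ι → α))
    (hσ : ∀ x, σ x = Function.update x i (τ (x i))) :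
    sign σ = sign τ ^ Fintype.card ({ j // j ≠ i } → α) := by
  have hconj : (piSplitAt i fun _ => α).permCongr σ = prodCongrLeft fun _ => τ := by
    ext p
    · simp [hσ, prodCongrLeft]
    · next j => simp [hσ, prodCongrLeft, Function.update, j.prop]
  rw [← sign_permCongr (piSplitAt i fun _ => α) σ, hconj, sign_prodCongrLeft, Finset.prod_const,
    Finset.card_univ]

theorem sign_of_forall_apply_eq_update_of_odd_card (hα : Odd (Fintype.card α)) (i : ι) (τ : Perm α)
    (σ : Perm (ι → α)) (hσ : ∀ x, σ x = Function.update x i (τ (x i))) :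
    sign σ = sign τ := by
  have hodd : Odd (Fintype.card ({ j // j ≠ i } → α)) := by
    rw [Fintype.card_fun]
    exact hα.pow
  rw [sign_of_forall_apply_eq_update i τ σ hσ, Int.units_pow_eq_pow_mod_two, Nat.odd_iff.1 hodd, pow_one]

end Equiv.Perm

section FiniteField

variable {F : Type*} [Field F] [Fintype F] [DecidableEq F]

theorem support_toPerm_units {u : Fˣ} (hu : u ≠ 1) :
    (MulAction.toPerm u : Perm F).support = {0}ᶜ := by
  ext x
  have hu' : (u : F) ≠ 1 := fun h => hu (Units.ext h)
  simp [mem_support, Units.smul_def, mul_left_eq_self₀, hu']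

theorem isCycle_toPerm_of_forall_mem_zpowers {g : Fˣ} (hg : ∀ u : Fˣ, u ∈ Subgroup.zpowers g)
    (hg1 : g ≠ 1) : (MulAction.toPerm g : Perm F).IsCycle := by
  have hsupp := support_toPerm_units (F := F) hg1
  refine ⟨1, by rw [← mem_support, hsupp]; simp, fun y hy => ?_⟩
  have hy0 : y ≠ 0 := by simpa [hsupp] using mem_support.2 hy
  obtain ⟨k, hk⟩ := hg (Units.mk0 y hy0)
  refine ⟨k, ?_⟩
  rw [← MulAction.toPermHom_apply, ← map_zpow]
  simp [Units.smul_def, hk]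

theorem ne_one_of_forall_mem_zpowers_of_odd_card (hF : Odd (Fintype.card F)) {g : Fˣ}
    (hg : ∀ u : Fˣ, u ∈ Subgroup.zpowers g) : g ≠ 1 := by
  rintro rfl
  have h1 : Fintype.card Fˣ = 1 :=
    Fintype.card_eq_one_iff.2 ⟨1, fun u => by simpa using hg u⟩
  have h2 : Fintype.card F ≠ 2 := fun h => by rw [h] at hF; exact absurd hF (by decide)
  rw [Fintype.card_units] at h1
  have := Fintype.one_lt_card (α := F)
  omega

theorem sign_toPerm_of_forall_mem_zpowers (hF : Odd (Fintype.card F)) {g : Fˣ}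
    (hg : ∀ u : Fˣ, u ∈ Subgroup.zpowers g) : sign (MulAction.toPerm g : Perm F) = -1 := by
  have hg1 := ne_one_of_forall_mem_zpowers_of_odd_card hF hg
  have hcard : (MulAction.toPerm g : Perm F).support.card = Fintype.card F - 1 := by
    rw [support_toPerm_units hg1, Finset.card_compl, Finset.card_singleton]
  have heven : Even (Fintype.card F - 1) := hF.tsub_odd odd_one
  rw [(isCycle_toPerm_of_forall_mem_zpowers hg hg1).sign, hcard, heven.neg_one_pow]

theorem sign_toPerm_pow_of_forall_mem_zpowers (hF : Odd (Fintype.card F)) {g : Fˣ}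
    (hg : ∀ u : Fˣ, u ∈ Subgroup.zpowers g) (h : ℕ) :
    sign (MulAction.toPerm (g ^ h) : Perm F) = (-1) ^ h := by
  rw [← MulAction.toPermHom_apply, map_pow, map_pow, MulAction.toPermHom_apply,
    sign_toPerm_of_forall_mem_zpowers hF hg]

theorem sign_toPerm_of_isSquare {u : Fˣ} (hu : IsSquare u) :
    sign (MulAction.toPerm u : Perm F) = 1 := by
  obtain ⟨d, rfl⟩ := hu
  rw [← MulAction.toPermHom_apply, map_mul, map_mul, Int.units_mul_self]

end FiniteField

theorem stmt6_general (q n : ℕ) (hq : Odd q)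
    (F : Type) [Field F] [Fintype F] [DecidableEq F] (hcard : Fintype.card F = q)
    (g : Fˣ) (hg : ∀ u : Fˣ, u ∈ Subgroup.zpowers g)
    (c : Fˣ) (h : ℕ) (hch : c = g ^ h)
    (i : Fin n)
    (σ : Equiv.Perm (Fin n → F))
    (hσ : ∀ x, σ x = Function.update x i ((c : F) * x i)) :
    Equiv.Perm.sign σ = (-1) ^ h ∧
      (Equiv.Perm.sign σ = -1 ↔ ¬ IsSquare c) := by
  subst hcard
  have hsign_c : sign σ = sign (MulAction.toPerm c : Perm F) :=
    sign_of_forall_apply_eq_update_of_odd_card hq i _ σ hσ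
  have hsign : sign σ = (-1) ^ h := by
    rw [hsign_c, hch, sign_toPerm_pow_of_forall_mem_zpowers hq hg]
  refine ⟨hsign, fun hodd hsq => ?_, fun hns => ?_⟩
  · rw [hsign_c, sign_toPerm_of_isSquare hsq] at hodd
    exact absurd hodd (by decide)
  · have hh : Odd h := Nat.not_even_iff_odd.1 fun he => hns (hch ▸ he.isSquare_pow g)
    rw [hsign, hh.neg_one_pow]

/-- For `q` odd, the sign of the permutation of `F_q^n`
multiplying the `i`-th coordinate by `c = g^h` (where `g` generates `F_q^*`
and `0 ≤ h ≤ q-2`) equals `(-1)^h`; equivalently, it is odd iff `c` is a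
non-square in `F_q^*`. -/
theorem stmt6 (q n : ℕ) (hq : Odd q) (hn : 1 ≤ n)
    (F : Type) [Field F] [Fintype F] [DecidableEq F] (hcard : Fintype.card F = q)
    (g : Fˣ) (hg : ∀ u : Fˣ, u ∈ Subgroup.zpowers g)
    (c : Fˣ) (h : ℕ) (hh : h ≤ q - 2) (hch : c = g ^ h)
    (i : Fin n)
    (σ : Equiv.Perm (Fin n → F))
    (hσ : ∀ x, σ x = Function.update x i ((c : F) * x i)) :
    Equiv.Perm.sign σ = (-1) ^ h ∧
      (Equiv.Perm.sign σ = -1 ↔ ¬ IsSquare c) :=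
  stmt6_general q n hq F hcard g hg c h hch i σ hσ
end

section
/- Let q be an odd prime power and n ≥ 1. Let J be the triangular automorphism of F_q^n given by J(x_1,...,x_n) = (a_1 x_1 + f_1(x_2,...,x_n), a_2 x_2 + f_2(x_3,...,x_n), ..., a_n x_n + f_n), where a_i ∈ F_q^*, f_i ∈ F_q[X_{i+1},...,X_n] for i < n, and f_n ∈ F_q. Then the sign of the permutation of F_q^n induced by J equals (-1)^{h_1 + ... + h_n}, where a_i = g^{h_i} for a fixed generator g of F_q^*. Equivalently, J is even if and only if the product a_1 a_2 ⋯ a_n is a square in F_q^*. -/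
/-!
Write `J` as the composite, for `i = 1, …, n` in this order, of the maps changing only the
`i`-th coordinate, `x_i ↦ a_i x_i + f_i(x_{i+1}, …, x_n)`: when the `i`-th map is applied the
later coordinates are still untouched. Such a map is a product, over the `q ^ (n - 1)` values of
the other coordinates, of permutations `x ↦ a_i x + c` of `F_q`, all of the same sign, and that
sign is `(-1) ^ h_i`: translations have odd order, hence are even, and multiplication by `g` is a
`(q - 1)`-cycle on `F_q^*`, hence odd. Since `q - 1` is even, `∏ a_i = g ^ (∑ h_i)` is a square
iff `∑ h_i` is even.
-/

open Equiv Equiv.Perm Finset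

theorem Int.units_pow_of_odd (u : ℤˣ) {m : ℕ} (hm : Odd m) : u ^ m = u := by
  rw [Int.units_pow_eq_pow_mod_two, Nat.odd_iff.mp hm, pow_one]

theorem isSquare_pow_iff_even {G : Type*} [Group G] {g : G} (hg : ∀ x, x ∈ Subgroup.zpowers g)
    (hord : Even (orderOf g)) (s : ℕ) : IsSquare (g ^ s) ↔ Even s := by
  refine ⟨fun ⟨b, hb⟩ => ?_, fun ⟨k, hk⟩ => ⟨g ^ k, by rw [hk, pow_add]⟩⟩
  obtain ⟨m, rfl⟩ := Subgroup.mem_zpowers_iff.mp (hg b)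
  have hdvd : (orderOf g : ℤ) ∣ s - (m + m) := by
    rw [orderOf_dvd_iff_zpow_eq_one, zpow_sub, zpow_add, zpow_natCast, hb, mul_inv_cancel]
  have h2 : (2 : ℤ) ∣ s - (m + m) := (Int.natCast_dvd_natCast.mpr hord.two_dvd).trans hdvd
  exact even_iff_two_dvd.mpr (by omega)

theorem FiniteField.sign_toPermHom_of_generator {F : Type*} [Field F] [Fintype F] [DecidableEq F]
    (hF : Odd (Fintype.card F)) {g : Fˣ} (hg : ∀ u, u ∈ Subgroup.zpowers g) :
    sign (MulAction.toPermHom Fˣ F g) = -1 := by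
  set π := MulAction.toPermHom Fˣ F g
  have hπ (x : F) : π x = g * x := rfl
  have hg1 : (g : F) ≠ 1 := by
    intro h1
    have hord := orderOf_eq_card_of_forall_mem_zpowers hg
    rw [Units.val_eq_one.mp h1, orderOf_one, Nat.card_eq_fintype_card, Fintype.card_units] at hord
    obtain ⟨k, hk⟩ := hF
    omega
  have hsupp : π.support = {0}ᶜ := by
    ext x
    simp [hπ, mul_left_eq_self₀, hg1]
  have hcycle : π.IsCycle := by
    refine ⟨1, by simpa [hπ] using hg1, fun y hy => ?_⟩
    have hy0 : y ≠ 0 := by simpa [← mem_support, hsupp] using hy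
    obtain ⟨m, hm⟩ := Subgroup.mem_zpowers_iff.mp (hg (Units.mk0 y hy0))
    refine ⟨m, ?_⟩
    rw [← map_zpow]
    simp [hm]
  rw [hcycle.sign, hsupp, card_compl, card_singleton,
    (Nat.Odd.sub_odd hF odd_one).neg_one_pow]

namespace Equiv.Perm

section OddOrder

variable {α : Type*} [DecidableEq α] [Fintype α]

theorem sign_eq_one_of_pow_eq_one {p : Perm α} {m : ℕ} (hm : Odd m) (hp : p ^ m = 1) :
    sign p = 1 := by
  rw [← Int.units_pow_of_odd (sign p) hm, ← map_pow, hp, map_one]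

theorem sign_addRight_of_odd_card_s14 [AddGroup α] (hα : Odd (Fintype.card α)) (c : α) :
    sign (Equiv.addRight c) = 1 :=
  sign_eq_one_of_pow_eq_one hα (by rw [nsmul_addRight, card_nsmul_eq_zero, addRight_zero])

end OddOrder

section UpdateCoord

variable {ι α : Type*} [DecidableEq ι]

def updateCoord (i : ι) (e : ({j // j ≠ i} → α) → Perm α) : Perm (ι → α) :=
  (funSplitAt i α).symm.permCongr (prodCongrLeft e)

theorem updateCoord_apply (i : ι) (e : ({j // j ≠ i} → α) → Perm α) (x : ι → α) :
    updateCoord i e x = Function.update x i (e (fun j => x j) (x i)) := by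
  ext j
  by_cases hj : j = i
  · subst hj; simp [updateCoord, permCongr_apply]
  · simp [updateCoord, permCongr_apply, hj]

theorem sign_updateCoord [Fintype ι] [Fintype α] [DecidableEq α] (i : ι)
    (e : ({j // j ≠ i} → α) → Perm α) : sign (updateCoord i e) = ∏ y, sign (e y) := by
  rw [updateCoord, sign_permCongr, sign_prodCongrLeft]

theorem sign_updateCoord_of_odd_card [Fintype ι] [Fintype α] [DecidableEq α]
    (hα : Odd (Fintype.card α)) (i : ι) (e : ({j // j ≠ i} → α) → Perm α) {s : ℤˣ}
    (hs : ∀ y, sign (e y) = s) : sign (updateCoord i e) = s := by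
  rw [sign_updateCoord, prod_congr rfl fun y _ => hs y, prod_const, card_univ, Fintype.card_fun]
  exact Int.units_pow_of_odd s hα.pow

end UpdateCoord

section Triangular

variable {α : Type*} [Fintype α] [DecidableEq α] {n : ℕ}
  (e : ∀ i : Fin n, ({j // i < j} → α) → Perm α)

theorem exists_triangular_prefix (hα : Odd (Fintype.card α)) {s : Fin n → ℤˣ}
    (hs : ∀ i y, sign (e i y) = s i) (m : ℕ) (hm : m ≤ n) :
    ∃ τ : Perm (Fin n → α),
      (∀ x j, τ x j = if (j : ℕ) < m then e j (fun k => x k) (x j) else x j) ∧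
        sign τ = ∏ i ∈ univ.filter fun i : Fin n => (i : ℕ) < m, s i := by
  induction m with
  | zero => exact ⟨1, by simp, by simp⟩
  | succ m ih =>
    obtain ⟨τ, hτ, hsign⟩ := ih (by omega)
    let i : Fin n := ⟨m, hm⟩
    let P := updateCoord i fun y => e i fun k => y ⟨k, k.2.ne'⟩
    refine ⟨P * τ, fun x j => ?_, ?_⟩
    · have hfixed : ∀ k : Fin n, m ≤ k → τ x k = x k := fun k hk => by
        rw [hτ, if_neg (by omega)]
      rw [mul_apply, updateCoord_apply]
      by_cases hj : j = i
      · subst hj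
        have hlater : (fun k : {k // i < k} => τ x k) = fun k : {k // i < k} => x k :=
          funext fun k => hfixed k (Fin.lt_def.mp k.2).le
        simp only [Function.update_self, hfixed i le_rfl, hlater]
        exact (if_pos m.lt_succ_self).symm
      · have hjm : (j : ℕ) < m ↔ (j : ℕ) < m + 1 := by
          have : (j : ℕ) ≠ m := fun h => hj (Fin.ext h)
          omega
        rw [Function.update_of_ne hj, hτ]
        simp only [hjm]
    · have hfilter : univ.filter (fun k : Fin n => (k : ℕ) < m + 1) =
          insert i (univ.filter fun k : Fin n => (k : ℕ) < m) := by
        ext k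
        simp only [mem_filter, mem_univ, true_and, mem_insert, Fin.ext_iff, i]
        omega
      rw [map_mul, sign_updateCoord_of_odd_card hα i _ fun _ => hs i _, hsign, hfilter,
        prod_insert (by simp [i])]

theorem sign_eq_prod_of_triangular (hα : Odd (Fintype.card α)) {s : Fin n → ℤˣ}
    (hs : ∀ i y, sign (e i y) = s i) (σ : Perm (Fin n → α))
    (hσ : ∀ x i, σ x i = e i (fun j => x j) (x i)) : sign σ = ∏ i, s i := by
  obtain ⟨τ, hτ, hsign⟩ := exists_triangular_prefix e hα hs n le_rfl
  have hτσ : τ = σ := by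
    ext x j
    rw [hτ, if_pos j.isLt, hσ]
  rw [← hτσ, hsign, filter_true_of_mem fun i _ => i.isLt]

end Triangular

end Equiv.Perm

theorem stmt14_general (q n : ℕ) (hq : Odd q)
    (F : Type) [Field F] [Fintype F] [DecidableEq F] (hcard : Fintype.card F = q)
    (g : Fˣ) (hg : ∀ u : Fˣ, u ∈ Subgroup.zpowers g)
    (a : Fin n → Fˣ) (h : Fin n → ℕ)
    (hah : ∀ i, a i = g ^ h i)
    (f : ∀ i : Fin n, MvPolynomial {j : Fin n // i < j} F)
    (σ : Equiv.Perm (Fin n → F))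
    (hσ : ∀ x i, σ x i = (a i : F) * x i + MvPolynomial.eval (fun j => x j.1) (f i)) :
    Equiv.Perm.sign σ = (-1) ^ (∑ i, h i) ∧
      (Equiv.Perm.sign σ = 1 ↔ IsSquare (∏ i, a i)) := by
  have hF : Odd (Fintype.card F) := hcard ▸ hq
  let e (i : Fin n) (y : {j // i < j} → F) : Perm F :=
    (MulAction.toPermHom Fˣ F (a i)).trans (Equiv.addRight (MvPolynomial.eval y (f i)))
  have hs (i : Fin n) (y : {j // i < j} → F) : sign (e i y) = (-1) ^ h i := by
    rw [sign_trans, sign_addRight_of_odd_card_s14 hF, one_mul, hah, map_pow, map_pow,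
      FiniteField.sign_toPermHom_of_generator hF hg]
  have hsign : sign σ = (-1) ^ ∑ i, h i := by
    rw [sign_eq_prod_of_triangular e hF hs σ hσ, prod_pow_eq_pow_sum]
  have hord : Even (orderOf g) := by
    rw [orderOf_eq_card_of_forall_mem_zpowers hg, Nat.card_eq_fintype_card, Fintype.card_units]
    exact Nat.Odd.sub_odd hF odd_one
  have hprod : ∏ i, a i = g ^ ∑ i, h i := by
    simp_rw [hah]
    exact prod_pow_eq_pow_sum _ _ _
  refine ⟨hsign, ?_⟩
  rw [hsign, neg_one_pow_eq_one_iff_even (by decide), hprod, isSquare_pow_iff_even hg hord]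

/-- For `q` odd, the sign of the triangular automorphism
`J(x)_i = a_i x_i + f_i(x_{i+1},…,x_n)` equals `(-1)^{h_1+⋯+h_n}` where
`a_i = g^{h_i}` for a generator `g` of `F_q^*`; equivalently `J` is even iff
`∏ a_i` is a square in `F_q^*`. -/
theorem stmt14 (q n : ℕ) (hq : Odd q) (hn : 1 ≤ n)
    (F : Type) [Field F] [Fintype F] [DecidableEq F] (hcard : Fintype.card F = q)
    (g : Fˣ) (hg : ∀ u : Fˣ, u ∈ Subgroup.zpowers g)
    (a : Fin n → Fˣ) (h : Fin n → ℕ) (hh : ∀ i, h i ≤ q - 2)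
    (hah : ∀ i, a i = g ^ h i)
    (f : ∀ i : Fin n, MvPolynomial {j : Fin n // i < j} F)
    (σ : Equiv.Perm (Fin n → F))
    (hσ : ∀ x i, σ x i = (a i : F) * x i + MvPolynomial.eval (fun j => x j.1) (f i)) :
    Equiv.Perm.sign σ = (-1) ^ (∑ i, h i) ∧
      (Equiv.Perm.sign σ = 1 ↔ IsSquare (∏ i, a i)) :=
  stmt14_general q n hq F hcard g hg a h hah f σ hσ
end

section
/- Let q = 2^m with m ≥ 2 and n ≥ 1. Every triangular automorphism J(x_1,...,x_n) = (a_1 x_1 + f_1(x_2,...,x_n), ..., a_n x_n + f_n) with a_i ∈ F_q^* induces an even permutation of F_q^n. -/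
/-!
A triangular map is a composite of maps each of which changes one coordinate by a permutation
depending only on the remaining coordinates, so it is even as soon as every affine map
`y ↦ a * y + c` of `F` is even. For `y ↦ a * y` this holds because its order divides
`q - 1`, which is odd. For a translation, conjugating by `y ↦ a * y` gives
`sign (· + a * c) = sign (· + c)`; choosing `a ∉ {0, -1}`, which is possible once `q > 2`,
yields `sign (· + c) = sign (· + (a + 1) * c) = sign (· + a * c) * sign (· + c)`,
so `sign (· + c) = sign (· + c) ^ 2 = 1`.
-/

open Equiv Equiv.Perm Finset

lemma Int.units_eq_one_of_pow_eq_one_of_odd {u : ℤˣ} {k : ℕ} (hk : Odd k) (h : u ^ k = 1) :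
    u = 1 := by
  rcases Int.units_eq_one_or u with rfl | rfl
  · rfl
  · rw [hk.neg_one_pow] at h
    exact absurd h (by decide)

section FiniteField

variable {F : Type*} [Field F] [Fintype F] [DecidableEq F]

lemma sign_addLeft_add (u v : F) :
    sign (Equiv.addLeft (u + v) : Perm F) = sign (Equiv.addLeft u) * sign (Equiv.addLeft v) := by
  rw [← map_mul]
  congr 1
  ext x
  simp

lemma sign_addLeft_units_mul (a : Fˣ) (c : F) :
    sign (Equiv.addLeft ((a : F) * c) : Perm F) = sign (Equiv.addLeft c) := by
  have hconj : (Equiv.addLeft ((a : F) * c) : Perm F) * MulAction.toPerm a =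
      MulAction.toPerm a * Equiv.addLeft c := by
    ext x
    simp [Units.smul_def]
  simpa only [map_mul, mul_comm _ (sign (MulAction.toPerm a : Perm F)), mul_right_inj]
    using congrArg sign hconj

theorem sign_addLeft (hF : 2 < Fintype.card F) (c : F) : sign (Equiv.addLeft c : Perm F) = 1 := by
  obtain ⟨a, -, ha⟩ := exists_mem_notMem_of_card_lt_card
    (s := ({0, -1} : Finset F)) (t := univ) (card_le_two.trans_lt hF)
  simp only [mem_insert, mem_singleton, not_or] at ha
  have ha1 : a + 1 ≠ 0 := fun h => ha.2 (eq_neg_of_add_eq_zero_left h)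
  calc sign (Equiv.addLeft c : Perm F)
      = sign (Equiv.addLeft (((Units.mk0 (a + 1) ha1 : Fˣ) : F) * c)) :=
        (sign_addLeft_units_mul _ c).symm
    _ = sign (Equiv.addLeft (((Units.mk0 a ha.1 : Fˣ) : F) * c)) * sign (Equiv.addLeft c) := by
        rw [Units.val_mk0, Units.val_mk0, add_mul, one_mul, sign_addLeft_add]
    _ = 1 := by rw [sign_addLeft_units_mul, Int.units_mul_self]

theorem sign_toPerm_units (hF : Even (Fintype.card F)) (a : Fˣ) :
    sign (MulAction.toPerm a : Perm F) = 1 := by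
  have hodd : Odd (Fintype.card Fˣ) := by
    rw [Fintype.card_units]
    exact Nat.Even.sub_odd Fintype.card_pos hF odd_one
  refine Int.units_eq_one_of_pow_eq_one_of_odd hodd ?_
  rw [← map_pow, ← MulAction.toPermHom_apply, ← map_pow, pow_card_eq_one, map_one, map_one]

end FiniteField

section Fiberwise

variable {ι α : Type*} [DecidableEq ι]

def Equiv.Perm.fiberwiseAt (i : ι) (h : ({j // j ≠ i} → α) → Perm α) : Perm (ι → α) :=
  (funSplitAt i α).symm.permCongr (prodCongrLeft h)

lemma Equiv.Perm.fiberwiseAt_apply (i : ι) (h : ({j // j ≠ i} → α) → Perm α) (x : ι → α) :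
    fiberwiseAt i h x = Function.update x i (h (fun j => x j) (x i)) := by
  ext j
  by_cases hj : j = i
  · subst hj; simp [fiberwiseAt, permCongr_apply]
  · simp [fiberwiseAt, permCongr_apply, hj]

lemma Equiv.Perm.sign_fiberwiseAt [Fintype ι] [Fintype α] [DecidableEq α] (i : ι)
    (h : ({j // j ≠ i} → α) → Perm α) :
    sign (fiberwiseAt i h) = ∏ c, sign (h c) := by
  rw [fiberwiseAt, sign_permCongr, sign_prodCongrLeft]

end Fiberwise

theorem sign_eq_one_of_triangular {ι α : Type*} [LinearOrder ι] [Fintype ι] [Fintype α]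
    [DecidableEq α] (g : ∀ i : ι, ({j // i < j} → α) → Perm α) (hg : ∀ i c, sign (g i c) = 1)
    (σ : Perm (ι → α)) (hσ : ∀ x i, σ x i = g i (fun j => x j) (x i)) : sign σ = 1 := by
  suffices h : ∀ s : Finset ι, ∃ π : Perm (ι → α), sign π = 1 ∧
      ∀ x, π x = fun j => if j ∈ s then σ x j else x j by
    obtain ⟨π, hπ, hπσ⟩ := h univ
    rwa [show π = σ by ext x j; simp [hπσ]] at hπ
  intro s
  induction s using Finset.induction_on_max with
  | empty => exact ⟨1, map_one _, fun x => by simp⟩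
  | insert i s hs ih =>
    obtain ⟨π, hπ, hπσ⟩ := ih
    refine ⟨fiberwiseAt i (fun c => g i fun j => c ⟨j, j.2.ne'⟩) * π, ?_, fun x => ?_⟩
    · rw [map_mul, sign_fiberwiseAt, hπ, mul_one]
      exact prod_eq_one fun c _ => hg _ _
    have hi : i ∉ s := fun h => (hs i h).false
    have hupper : ∀ j : {j // i < j}, j.1 ∉ s := fun j h => (hs _ h).not_gt j.2
    ext j
    rw [mul_apply, fiberwiseAt_apply, hπσ]
    rcases eq_or_ne j i with rfl | hj
    · simp [hi, hupper, hσ]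
    · simp [hj]

theorem stmt15_general (m n : ℕ) (hm : 2 ≤ m)
    (F : Type) [Field F] [Fintype F] [DecidableEq F]
    (hcard : Fintype.card F = 2 ^ m)
    (a : Fin n → Fˣ)
    (f : ∀ i : Fin n, MvPolynomial {j : Fin n // i < j} F)
    (σ : Equiv.Perm (Fin n → F))
    (hσ : ∀ x i, σ x i = (a i : F) * x i + MvPolynomial.eval (fun j => x j.1) (f i)) :
    Equiv.Perm.sign σ = 1 := by
  have hF : 2 < Fintype.card F := by
    rw [hcard]
    calc 2 < 2 ^ 2 := by norm_num
      _ ≤ 2 ^ m := Nat.pow_le_pow_right two_pos hm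
  have hEven : Even (Fintype.card F) := hcard ▸ Nat.even_pow.2 ⟨even_two, by omega⟩
  refine sign_eq_one_of_triangular
    (fun i c => Equiv.addLeft (MvPolynomial.eval c (f i)) * MulAction.toPerm (a i))
    (fun i c => by rw [map_mul, sign_addLeft hF, sign_toPerm_units hEven, mul_one]) σ
    fun x i => ?_
  simp [hσ, Units.smul_def, add_comm]

/-- For `q = 2^m`, `m ≥ 2`, every triangular automorphism
`J(x)_i = a_i x_i + f_i(x_{i+1},…,x_n)` with `a_i ∈ F_q^*` induces an even
permutation of `F_q^n`. -/
theorem stmt15 (m n : ℕ) (hm : 2 ≤ m) (hn : 1 ≤ n)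
    (F : Type) [Field F] [Fintype F] [DecidableEq F]
    (hcard : Fintype.card F = 2 ^ m)
    (a : Fin n → Fˣ)
    (f : ∀ i : Fin n, MvPolynomial {j : Fin n // i < j} F)
    (σ : Equiv.Perm (Fin n → F))
    (hσ : ∀ x i, σ x i = (a i : F) * x i + MvPolynomial.eval (fun j => x j.1) (f i)) :
    Equiv.Perm.sign σ = 1 :=
  stmt15_general m n hm F hcard a f σ hσ
end

section
/- Let q be a prime power with q odd or q = 2^m, m ≥ 2, and let n ≥ 1. Every strictly triangular automorphism of F_q^n, J(x_1,...,x_n) = (x_1 + f_1(x_2,...,x_n), ..., x_{n-1} + f_{n-1}(x_n), x_n + f_n) with f_i ∈ F_q[X_{i+1},...,X_n] and f_n ∈ F_q, induces an even permutation of F_q^n. -/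
/-!
A strictly triangular map is a product of elementary automorphisms, each adding to one
coordinate a function of the others. Splitting `F^n = F × F^(n-1)` at that coordinate, an
elementary automorphism is a family of translations of `F`, so it suffices that every
translation of `F` is even. All nonzero translations are conjugate under scalings, so they share
a sign `s`; when `|F| > 2`, writing `c = a + (c - a)` with `a ∉ {0, c}` gives `s = s * s`.
-/

open Equiv Equiv.Perm

section Translation

variable {F : Type*} [DivisionRing F] [Fintype F] [DecidableEq F]

lemma sign_addRight_mul {u : F} (hu : u ≠ 0) (d : F) :
    sign (Equiv.addRight (u * d)) = sign (Equiv.addRight d) := by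
  have hconj : (Equiv.addRight (u * d) : Perm F) =
      (Equiv.mulLeft₀ u hu).permCongr (Equiv.addRight d) := by
    ext x
    simp [Equiv.mulLeft₀, mul_add, mul_inv_cancel_left₀ hu]
  rw [hconj, sign_permCongr]

lemma sign_addRight_eq_of_ne_zero {c d : F} (hc : c ≠ 0) (hd : d ≠ 0) :
    sign (Equiv.addRight d) = sign (Equiv.addRight c) := by
  rw [← inv_mul_cancel_right₀ hc d, sign_addRight_mul (by simpa [hc] using hd)]

theorem sign_addRight_eq_one (hF : 2 < Fintype.card F) (c : F) : sign (Equiv.addRight c) = 1 := by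
  rcases eq_or_ne c 0 with rfl | hc
  · simp
  obtain ⟨a, -, ha⟩ : ∃ a ∈ (Finset.univ : Finset F), a ∉ ({0, c} : Finset F) :=
    Finset.exists_mem_notMem_of_card_lt_card <|
      (Finset.card_le_two).trans_lt (by rwa [Finset.card_univ])
  simp only [Finset.mem_insert, Finset.mem_singleton, not_or] at ha
  have hsq : sign (Equiv.addRight c) = sign (Equiv.addRight c) * sign (Equiv.addRight c) := by
    conv_lhs => rw [← add_sub_cancel a c, Equiv.addRight_add, map_mul,
      sign_addRight_eq_of_ne_zero hc ha.1,
      sign_addRight_eq_of_ne_zero hc (sub_ne_zero.2 (Ne.symm ha.2))]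
  rw [hsq, Int.units_mul_self]

end Translation

section Elementary

variable {ι F : Type*} [DecidableEq ι]

def elementaryPerm [AddGroup F] (K : ι) (g : ({j // j ≠ K} → F) → F) : Perm (ι → F) :=
  (funSplitAt K F).symm.permCongr (prodCongrLeft fun y => Equiv.addRight (g y))

lemma elementaryPerm_apply [AddGroup F] (K : ι) (g : ({j // j ≠ K} → F) → F) (x : ι → F) :
    elementaryPerm K g x = Function.update x K (x K + g fun j => x j) := by
  ext j
  rcases eq_or_ne j K with rfl | hj
  · simp [elementaryPerm]
  · simp [elementaryPerm, hj]

lemma elementaryPerm_inv_apply [AddGroup F] (K : ι) (g : ({j // j ≠ K} → F) → F)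
    (x : ι → F) :
    (elementaryPerm K g)⁻¹ x = Function.update x K (x K - g fun j => x j) := by
  have hrest (v : F) : (fun j : {j // j ≠ K} => Function.update x K v j) = fun j => x j.1 :=
    funext fun j => Function.update_of_ne j.2 _ _
  apply (elementaryPerm K g).injective
  simp [elementaryPerm_apply, hrest]

theorem sign_elementaryPerm [Fintype ι] [DivisionRing F] [Fintype F] [DecidableEq F]
    (hF : 2 < Fintype.card F) (K : ι) (g : ({j // j ≠ K} → F) → F) :
    sign (elementaryPerm K g) = 1 := by
  simp [elementaryPerm, sign_prodCongrLeft, sign_addRight_eq_one hF]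

end Elementary

section Triangular

variable {ι F : Type*} [LinearOrder ι] [Fintype ι] [DivisionRing F] [Fintype F] [DecidableEq F]

/-- Peeling off the largest index `a ∈ S` leaves the coordinates after `a` fixed, so
`E⁻¹ * σ` is of the same shape on `S \ {a}`, where `E` is the elementary automorphism at `a`. -/
theorem sign_eq_one_of_forall_apply_eq_add_ite (hF : 2 < Fintype.card F)
    (g : ∀ i : ι, ({j // i < j} → F) → F) (S : Finset ι) {σ : Perm (ι → F)}
    (hσ : ∀ x i, σ x i = x i + if i ∈ S then g i (fun j => x j) else 0) : sign σ = 1 := by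
  induction S using Finset.induction_on_max generalizing σ with
  | empty =>
    have hσ1 : σ = 1 := by
      ext x i
      simp [hσ]
    rw [hσ1, map_one]
  | insert a s has ih =>
    set E := elementaryPerm a fun y => g a fun j => y ⟨j, j.2.ne'⟩
    have hlater (x : ι → F) : (fun j : {j // a < j} => σ x j) = fun j => x j.1 := by
      funext j
      have hj : j.1 ∉ insert a s := by
        simp only [Finset.mem_insert, not_or]
        exact ⟨j.2.ne', fun hs => (has _ hs).not_gt j.2⟩
      rw [hσ, if_neg hj, add_zero]
    have hτ : ∀ x i, (E⁻¹ * σ) x i = x i + if i ∈ s then g i (fun j => x j) else 0 := by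
      intro x i
      rw [Perm.mul_apply, elementaryPerm_inv_apply]
      rcases eq_or_ne i a with rfl | hi
      · have hnot : i ∉ s := fun hs => (has _ hs).false
        simp only [Function.update_self, hlater]
        simp [hσ, hnot]
      · simp [hσ, hi]
    rw [← mul_inv_cancel_left E σ, map_mul, ih hτ, sign_elementaryPerm hF, one_mul]

end Triangular

theorem stmt17_general (q n : ℕ)
    (hq : Odd q ∨ ∃ m : ℕ, 2 ≤ m ∧ q = 2 ^ m)
    (F : Type) [Field F] [Fintype F] [DecidableEq F] (hcard : Fintype.card F = q)
    (f : ∀ i : Fin n, MvPolynomial {j : Fin n // i < j} F)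
    (σ : Equiv.Perm (Fin n → F))
    (hσ : ∀ x i, σ x i = x i + MvPolynomial.eval (fun j => x j.1) (f i)) :
    Equiv.Perm.sign σ = 1 := by
  have hF : 2 < Fintype.card F := by
    have h1 : 1 < Fintype.card F := Fintype.one_lt_card
    rcases hq with ⟨k, hk⟩ | ⟨m, hm, hqm⟩
    · omega
    · have : 2 ^ 2 ≤ 2 ^ m := Nat.pow_le_pow_right two_pos hm
      omega
  exact sign_eq_one_of_forall_apply_eq_add_ite hF (fun i y => MvPolynomial.eval y (f i))
    Finset.univ fun x i => by simp [hσ]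

/-- For `q` odd or `q = 2^m` with `m ≥ 2`, every strictly
triangular automorphism `J(x)_i = x_i + f_i(x_{i+1},…,x_n)` of `F_q^n`
induces an even permutation. -/
theorem stmt17 (q n : ℕ) (hn : 1 ≤ n)
    (hq : Odd q ∨ ∃ m : ℕ, 2 ≤ m ∧ q = 2 ^ m)
    (F : Type) [Field F] [Fintype F] [DecidableEq F] (hcard : Fintype.card F = q)
    (f : ∀ i : Fin n, MvPolynomial {j : Fin n // i < j} F)
    (σ : Equiv.Perm (Fin n → F))
    (hσ : ∀ x i, σ x i = x i + MvPolynomial.eval (fun j => x j.1) (f i)) :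
    Equiv.Perm.sign σ = 1 :=
  stmt17_general q n hq F hcard f σ hσ
end

section
/- Let q = 2^m with m ≥ 2 and n ≥ 1. Every tame automorphism of F_q^n — i.e., every element of the subgroup of bijective polynomial maps generated by affine automorphisms and elementary automorphisms — induces an even permutation of F_q^n. -/
/-!
Over a field with `q = 2^m` elements, `m ≥ 2`, we have characteristic 2 and `4 ∣ q`.
An elementary map `x ↦ x + f(x̂ᵢ) eᵢ` is then an involution whose fixed-point set `{f = 0}`
is a union of lines parallel to `eᵢ`; so it moves a multiple of 4 points and is even.
Translations are even for the same reason. A linear automorphism is a product of transvections,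
which are elementary, and a diagonal map, whose order divides the odd number `q - 1`.
-/

open Equiv Function Matrix

namespace Equiv.Perm

variable {α : Type*} [Fintype α] [DecidableEq α]

theorem sign_eq_one_of_pow_eq_one_of_odd {σ : Perm α} {k : ℕ} (hk : Odd k) (h : σ ^ k = 1) :
    sign σ = 1 :=
  (pow_eq_one_iff_of_coprime hk.coprime_two_right).1
    ⟨by rw [← map_pow, h, map_one], Int.units_sq _⟩

theorem sign_eq_one_of_sq_eq_one_of_four_dvd {σ : Perm α} (hσ : σ ^ 2 = 1) (hα : 4 ∣ Fintype.card α)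
    (hfix : 4 ∣ Fintype.card (fixedPoints σ)) : sign σ = 1 := by
  obtain ⟨k, hk⟩ := Nat.dvd_sub hα hfix
  rw [sign_of_pow_two_eq_one hσ, hk, show 4 * k = 2 * (2 * k) by ring,
    Nat.mul_div_cancel_left _ two_pos, pow_mul, Int.units_sq, one_pow]

end Equiv.Perm

open Equiv.Perm

theorem sign_addRight_eq_one_s18 {V : Type*} [AddGroup V] [Fintype V] [DecidableEq V]
    (hV : ∀ v : V, v + v = 0) (h4 : 4 ∣ Fintype.card V) (b : V) :
    sign (Equiv.addRight b) = 1 := by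
  refine sign_eq_one_of_sq_eq_one_of_four_dvd (Perm.ext fun x => ?_) h4 ?_
  · simp [sq, add_assoc, hV]
  · have hfix : fixedPoints (Equiv.addRight b) = {_x | b = 0} := by
      ext x; simp [IsFixedPt]
    rw [Fintype.card_congr (Equiv.setCongr hfix)]
    by_cases hb : b = 0 <;> simp [hb, h4]

theorem sign_eq_one_of_apply_eq_update_add {ι F : Type*} [Fintype ι] [DecidableEq ι] [Ring F]
    [Fintype F] [DecidableEq F] [CharP F 2] (h4 : 4 ∣ Fintype.card F) (i : ι)
    (e : ({j // j ≠ i} → F) → F) {σ : Perm (ι → F)}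
    (hσ : ∀ x, σ x = update x i (x i + e fun j => x j)) : sign σ = 1 := by
  have hrest : ∀ (x : ι → F) (v : F),
      (fun j : {j // j ≠ i} => update x i v j) = fun j : {j // j ≠ i} => x j :=
    fun x v => funext fun j => update_of_ne j.2 v x
  have hfixed : ∀ x, x ∈ fixedPoints σ ↔ e (fun j => x j) = 0 := by
    intro x
    rw [mem_fixedPoints, IsFixedPt, hσ, update_eq_self_iff, add_eq_left]
  let split := (funSplitAt i F).trans (prodComm _ _)
  refine sign_eq_one_of_sq_eq_one_of_four_dvd (Perm.ext fun x => ?_) ?_ ?_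
  · simp [sq, hσ, hrest, add_assoc, CharTwo.add_self_eq_zero]
  · rw [Fintype.card_congr split, Fintype.card_prod]
    exact dvd_mul_of_dvd_right h4 _
  · rw [Fintype.card_congr ((split.subtypeEquiv (q := fun p => e p.1 = 0) hfixed).trans
      (prodSubtypeFstEquivSubtypeProd (p := fun y => e y = 0))), Fintype.card_prod]
    exact dvd_mul_of_dvd_right h4 _

section Linear

variable {n K : Type*} [Fintype n] [DecidableEq n]

theorem sign_eq_one_of_coe_eq_mulVec_transvection [CommRing K] [Fintype K] [DecidableEq K]
    [CharP K 2] (h4 : 4 ∣ Fintype.card K) (t : TransvectionStruct n K) {σ : Perm (n → K)}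
    (hσ : ⇑σ = t.toMatrix.mulVec) : sign σ = 1 := by
  refine sign_eq_one_of_apply_eq_update_add h4 t.i (fun y => t.c * y ⟨t.j, t.hij.symm⟩)
    fun x => ?_
  rw [hσ, TransvectionStruct.toMatrix, transvection, add_mulVec, one_mulVec, single_mulVec]
  funext k
  by_cases hk : k = t.i
  · subst hk
    simp
  · simp [hk]

variable [Field K]

theorem exists_perm_coe_eq_mulVec {A : Matrix n n K} (hA : IsUnit A) :
    ∃ σ : Perm (n → K), ⇑σ = A.mulVec :=
  ⟨.ofBijective _ ⟨mulVec_injective_iff_isUnit.2 hA, mulVec_surjective_iff_isUnit.2 hA⟩, rfl⟩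

variable [Fintype K] [DecidableEq K] [CharP K 2]

theorem sign_eq_one_of_coe_eq_mulVec_diagonal {D : n → K}
    (hD : (diagonal D).det ≠ 0) {σ : Perm (n → K)} (hσ : ⇑σ = (diagonal D).mulVec) :
    sign σ = 1 := by
  have hD_ne : ∀ i, D i ≠ 0 := by simpa [Finset.prod_ne_zero_iff] using hD
  have hσD : ∀ x, σ x = D * x := fun x => funext fun i => by rw [hσ, mulVec_diagonal]; rfl
  have hpow : ∀ k x, (σ ^ k) x = D ^ k * x := by
    intro k x
    induction k with
    | zero => simp
    | succ k ih => rw [pow_succ', Perm.mul_apply, ih, hσD, pow_succ', mul_assoc]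
  have hodd : Odd (Fintype.card K - 1) := by
    have := FiniteField.even_card_of_char_two (ringChar.eq K 2)
    have := Fintype.card_pos (α := K)
    rw [Nat.odd_iff]
    omega
  have hD_pow : D ^ (Fintype.card K - 1) = 1 :=
    funext fun i => FiniteField.pow_card_sub_one_eq_one _ (hD_ne i)
  exact sign_eq_one_of_pow_eq_one_of_odd hodd
    (Perm.ext fun x => by rw [hpow, hD_pow, one_mul, Perm.one_apply])

theorem sign_eq_one_of_coe_eq_mulVec (h4 : 4 ∣ Fintype.card K) {A : Matrix n n K}
    (hA : A.det ≠ 0) {σ : Perm (n → K)} (hσ : ⇑σ = A.mulVec) : sign σ = 1 := by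
  refine diagonal_transvection_induction_of_det_ne_zero
    (fun A => ∀ σ : Perm (n → K), ⇑σ = A.mulVec → sign σ = 1) A hA
    (fun D hD σ hσ => sign_eq_one_of_coe_eq_mulVec_diagonal hD hσ)
    (fun t σ hσ => sign_eq_one_of_coe_eq_mulVec_transvection h4 t hσ) ?_ σ hσ
  intro A B hA hB ihA ihB σ hσ
  obtain ⟨σA, hσA⟩ := exists_perm_coe_eq_mulVec ((isUnit_iff_isUnit_det A).2 hA.isUnit)
  obtain ⟨σB, hσB⟩ := exists_perm_coe_eq_mulVec ((isUnit_iff_isUnit_det B).2 hB.isUnit)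
  have hσ_mul : σ = σA * σB := Perm.ext fun x => by simp [hσ, hσA, hσB, mulVec_mulVec]
  rw [hσ_mul, Perm.sign_mul, ihA σA hσA, ihB σB hσB, mul_one]

theorem sign_eq_one_of_apply_eq_mulVec_add [Nonempty n] (h4 : 4 ∣ Fintype.card K)
    {A : Matrix n n K} (hA : IsUnit A) (b : n → K) {τ : Perm (n → K)}
    (hτ : ∀ x, τ x = A *ᵥ x + b) : sign τ = 1 := by
  obtain ⟨σ, hσ⟩ := exists_perm_coe_eq_mulVec hA
  have hτ_mul : τ = Equiv.addRight b * σ := Perm.ext fun x => by simp [hτ, hσ]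
  have hV : ∀ v : n → K, v + v = 0 := fun v => funext fun j => CharTwo.add_self_eq_zero (v j)
  have h4V : 4 ∣ Fintype.card (n → K) := by
    rw [Fintype.card_fun]
    exact dvd_pow h4 Fintype.card_ne_zero
  rw [hτ_mul, Perm.sign_mul, sign_addRight_eq_one_s18 hV h4V,
    sign_eq_one_of_coe_eq_mulVec h4 ((isUnit_iff_isUnit_det A).1 hA).ne_zero hσ, one_mul]

end Linear

/-- For `q = 2^m`, `m ≥ 2`, every element of the tame subgroup
(the subgroup of permutations of `F_q^n` generated by affine automorphisms
and elementary automorphisms) is an even permutation. -/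
theorem stmt18 (m n : ℕ) (hm : 2 ≤ m) (hn : 1 ≤ n)
    (F : Type) [Field F] [Fintype F] [DecidableEq F]
    (hcard : Fintype.card F = 2 ^ m)
    (σ : Equiv.Perm (Fin n → F))
    (hσ : σ ∈ Subgroup.closure
      ({τ | ∃ (A : Matrix (Fin n) (Fin n) F) (b : Fin n → F),
          IsUnit A ∧ ∀ x, τ x = A.mulVec x + b} ∪
       {τ | ∃ (i : Fin n) (a : MvPolynomial {j : Fin n // j ≠ i} F),
          ∀ x, τ x = Function.update x i
            (x i + MvPolynomial.eval (fun j => x j.1) a)} :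
        Set (Equiv.Perm (Fin n → F)))) :
    Equiv.Perm.sign σ = 1 := by
  have h4 : 4 ∣ Fintype.card F := hcard ▸ pow_dvd_pow 2 hm
  have : CharP F 2 := ringChar.eq_iff.1 <| FiniteField.even_card_iff_char_two.2 <|
    Nat.mod_eq_zero_of_dvd ((by norm_num : 2 ∣ 4).trans h4)
  have : Nonempty (Fin n) := Fin.pos_iff_nonempty.1 hn
  refine (Subgroup.closure_le sign.ker).2 ?_ hσ
  rintro τ (⟨A, b, hA, hτ⟩ | ⟨i, a, hτ⟩)
  · exact sign_eq_one_of_apply_eq_mulVec_add h4 hA b hτ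
  · exact sign_eq_one_of_apply_eq_update_add h4 i (fun y => MvPolynomial.eval y a) hτ
end
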